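/- Let p be a prime, S a finite p-group, and F a fusion system on S satisfying Axiom I_S (Aut_S(S) is a Sylow p-subgroup of Aut_F(S)) and Axiom II (every φ ∈ Hom_F(P,S) such that φ(P) is fully F-centralized extends to a morphism in Hom_F(N_φ,S)). Let P ≤ S be a fully F-centralized subgroup such that |N_S(P)| ≥ |N_S(Q)| for every fully F-centralized subgroup Q that is F-conjugate to P. Then Aut_S(P) is a Sylow p-subgroup of Aut_F(P). -/

import Mathlib

/-! ## Collections of morphisms between subgroups -/

section Collections

variable {S : Type*} [Group S]

/-- The conjugation homomorphism `P →* S`, `u ↦ s * u * s⁻¹`. -/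
def conjHom (s : S) (P : Subgroup S) : P →* S :=
  (MulAut.conj s).toMonoidHom.comp P.subtype

/-- A "collection" of morphism sets on the poset of subgroups of `S`:
for each pair of subgroups `P Q ≤ S` a set of group homomorphisms `P →* S`
(to be thought of as morphisms from `P` to `Q`, i.e. maps landing in `Q`). -/
abbrev Collection (S : Type*) [Group S] :=
  ∀ (P : Subgroup S), Subgroup S → Set (P →* S)

namespace Collection

/-- `P` and `Q` are conjugate in the collection `C` if some morphism of `C`
restricts to an isomorphism from `P` onto `Q`. -/
def IsConj (C : Collection S) (P Q : Subgroup S) : Prop :=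
  ∃ φ ∈ C P Q, MonoidHom.range φ = Q

/-- `P` is fully centralized: its centralizer has maximal order in its conjugacy class. -/
def FullyCentralized (C : Collection S) (P : Subgroup S) : Prop :=
  ∀ Q : Subgroup S, C.IsConj P Q →
    Nat.card (Subgroup.centralizer (Q : Set S)) ≤ Nat.card (Subgroup.centralizer (P : Set S))

/-- `P` is fully normalized: its normalizer has maximal order in its conjugacy class. -/
def FullyNormalized (C : Collection S) (P : Subgroup S) : Prop :=
  ∀ Q : Subgroup S, C.IsConj P Q → Nat.card (Subgroup.normalizer (Q : Set S)) ≤ Nat.card (Subgroup.normalizer (P : Set S))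

end Collection

/-- The set `Aut_S(P)` of automorphisms of `P` induced by conjugation by elements of the
normalizer `N_S(P)`, as a set of homomorphisms `P →* S`. -/
def autSSet (P : Subgroup S) : Set (P →* S) :=
  {φ | ∃ s ∈ Subgroup.normalizer (P : Set S), φ = conjHom s P}

/-- `Aut_S(P)` is a Sylow `p`-subgroup of `Aut_C(P) = C P P`:  `Aut_S(P)` is contained
in `Aut_C(P)`, has `p`-power order, and has index prime to `p` in `Aut_C(P)`. -/
def Collection.AutSIsSylow (p : ℕ) (C : Collection S) (P : Subgroup S) : Prop :=
  autSSet P ⊆ C P P ∧ (∃ n : ℕ, Nat.card (autSSet P) = p ^ n) ∧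
    ∃ k : ℕ, ¬ p ∣ k ∧ Nat.card (C P P) = k * Nat.card (autSSet P)

/-- A collection is level-wise closed if it contains all conjugation maps induced by `S`,
the inverse of every isomorphism it contains, and all composites of composable
isomorphisms it contains. -/
def LevelwiseClosed (C : Collection S) : Prop :=
  (∀ (P Q : Subgroup S) (s : S), (∀ u ∈ P, s * u * s⁻¹ ∈ Q) → conjHom s P ∈ C P Q) ∧
  (∀ (P Q : Subgroup S), ∀ φ ∈ C P Q, MonoidHom.range φ = Q → ∀ ψ : Q →* S,
    (∀ (u : P) (hq : (φ u : S) ∈ Q), ψ ⟨φ u, hq⟩ = u) → ψ ∈ C Q P) ∧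
  (∀ (P Q R : Subgroup S) (φ : P →* S), φ ∈ C P Q → ∀ ψ : Q →* S, ψ ∈ C Q R →
    ∀ hφ : MonoidHom.range φ = Q, MonoidHom.range ψ = R →
    ψ.comp (φ.codRestrict Q (fun u => hφ ▸ show φ u ∈ φ.range from ⟨u, rfl⟩)) ∈ C P R)

end Collections

/-! ## Fusion systems -/

section Fusion

variable {S : Type*} [Group S]

/-- A fusion system on a group `S`: for each pair of subgroups `P, Q ≤ S`, a set
`Hom P Q` of injective homomorphisms `P → Q` (represented as homomorphisms `P →* S`
with image contained in `Q`), containing all conjugation maps induced by `S`, closed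
under composition, and such that every morphism restricts to an isomorphism onto its
image lying in the fusion system, whose inverse also lies in the fusion system. -/
structure FusionSystem (S : Type*) [Group S] where
  Hom : Collection S
  injective' : ∀ {P Q : Subgroup S} {φ : P →* S}, φ ∈ Hom P Q → Function.Injective φ
  mapsTo' : ∀ {P Q : Subgroup S} {φ : P →* S}, φ ∈ Hom P Q → ∀ u : P, φ u ∈ Q
  conj_mem' : ∀ (P Q : Subgroup S) (s : S), (∀ u ∈ P, s * u * s⁻¹ ∈ Q) →
    conjHom s P ∈ Hom P Q
  comp_mem' : ∀ {P Q R : Subgroup S} {φ : P →* S} {ψ : Q →* S},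
    (hφ : φ ∈ Hom P Q) → (hψ : ψ ∈ Hom Q R) →
    ψ.comp (φ.codRestrict Q (mapsTo' hφ)) ∈ Hom P R
  target_mem' : ∀ {P Q : Subgroup S} {φ : P →* S}, φ ∈ Hom P Q → φ ∈ Hom P φ.range
  inv_mem' : ∀ {P Q : Subgroup S} {φ : P →* S}, φ ∈ Hom P Q →
    ∃ ψ ∈ Hom φ.range P, ∀ u : P, ψ ⟨φ u, ⟨u, rfl⟩⟩ = u

/-- The subgroup `N_φ = {x ∈ N_S(P) | ∃ y ∈ N_S(φ(P)), ∀ u ∈ P, φ(xux⁻¹) = yφ(u)y⁻¹}`. -/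
def Nphi (P : Subgroup S) (φ : P →* S) : Subgroup S where
  carrier := {x | x ∈ Subgroup.normalizer (P : Set S) ∧ ∃ y ∈ Subgroup.normalizer (φ.range : Set S),
    ∀ (u v : S) (hu : u ∈ P) (hv : v ∈ P), v = x * u * x⁻¹ →
      φ ⟨v, hv⟩ = y * φ ⟨u, hu⟩ * y⁻¹}
  one_mem' := by
    refine ⟨(Subgroup.normalizer (P : Set S)).one_mem, 1, (Subgroup.normalizer (φ.range : Set S)).one_mem, ?_⟩
    intro u v hu hv hveq
    have h1 : (⟨v, hv⟩ : P) = ⟨u, hu⟩ := Subtype.ext (show v = u by rw [hveq]; group)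
    rw [h1]; group
  mul_mem' := by
    rintro x₁ x₂ ⟨hx₁, y₁, hy₁, h₁⟩ ⟨hx₂, y₂, hy₂, h₂⟩
    refine ⟨mul_mem hx₁ hx₂, y₁ * y₂, mul_mem hy₁ hy₂, ?_⟩
    intro u v hu hv hveq
    have hw : x₂ * u * x₂⁻¹ ∈ P := (Subgroup.mem_normalizer_iff.mp hx₂ u).mp hu
    have e1 : φ ⟨v, hv⟩ = y₁ * φ ⟨x₂ * u * x₂⁻¹, hw⟩ * y₁⁻¹ :=
      h₁ _ _ hw hv (by rw [hveq]; group)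
    have e2 : φ ⟨x₂ * u * x₂⁻¹, hw⟩ = y₂ * φ ⟨u, hu⟩ * y₂⁻¹ := h₂ _ _ hu hw rfl
    rw [e1, e2]; group
  inv_mem' := by
    rintro x ⟨hx, y, hy, h⟩
    refine ⟨Subgroup.inv_mem _ hx, y⁻¹, Subgroup.inv_mem _ hy, ?_⟩
    intro u v hu hv hveq
    have e1 : φ ⟨u, hu⟩ = y * φ ⟨v, hv⟩ * y⁻¹ :=
      h _ _ hv hu (by rw [hveq]; group)
    rw [e1]; group

namespace FusionSystem

/-- Axiom I of saturation: every fully normalized subgroup is fully centralized and its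
`S`-automorphism group is a Sylow `p`-subgroup of its full automorphism group. -/
def AxiomI (p : ℕ) (F : FusionSystem S) : Prop :=
  ∀ P : Subgroup S, F.Hom.FullyNormalized P →
    F.Hom.FullyCentralized P ∧ F.Hom.AutSIsSylow p P

/-- Axiom I restricted to the full subgroup `S` itself:
`Aut_S(S)` is a Sylow `p`-subgroup of `Aut_F(S)`. -/
def AxiomIS (p : ℕ) (F : FusionSystem S) : Prop :=
  F.Hom.AutSIsSylow p ⊤

/-- Axiom II of saturation (the extension axiom): every morphism `φ : P → S` of `F`
whose image is fully centralized extends to a morphism of `F` defined on `N_φ`. -/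
def AxiomII (F : FusionSystem S) : Prop :=
  ∀ (P : Subgroup S) (φ : P →* S), φ ∈ F.Hom P ⊤ →
    F.Hom.FullyCentralized φ.range →
    ∃ φbar ∈ F.Hom (Nphi P φ) ⊤,
      ∀ (u : S) (hu : u ∈ P) (hu' : u ∈ Nphi P φ), φbar ⟨u, hu'⟩ = φ ⟨u, hu⟩

/-- A fusion system is saturated if it satisfies Axioms I and II. -/
def Saturated (p : ℕ) (F : FusionSystem S) : Prop :=
  F.AxiomI p ∧ F.AxiomII

end FusionSystem

/-- The closure of a collection: the smallest fusion system containing it.  (The morphism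
sets of the closure are the intersections of the morphism sets over all fusion systems
containing the collection.) -/
def closureHom (C : Collection S) : Collection S :=
  fun P Q =>
    {φ | ∀ F : FusionSystem S, (∀ P' Q', C P' Q' ⊆ F.Hom P' Q') → φ ∈ F.Hom P Q}

/-- A level-wise closed collection `C` is saturated at `P ≤ S` if:
(I_P) every fully normalized `Q` conjugate to `P` in `C` is fully centralized and
`Aut_S(Q)` is a Sylow `p`-subgroup of `Aut_C(Q)`; and
(II_P) every `φ ∈ Hom_C(P,S)` with fully centralized image extends to a morphism
`N_φ → S` in the closure of `C`. -/
def SaturatedAt (p : ℕ) (C : Collection S) (P : Subgroup S) : Prop :=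
  (∀ Q : Subgroup S, C.IsConj P Q → C.FullyNormalized Q →
    C.FullyCentralized Q ∧ C.AutSIsSylow p Q) ∧
  (∀ φ ∈ C P ⊤, C.FullyCentralized (MonoidHom.range φ) →
    ∃ φbar ∈ closureHom C (Nphi P φ) ⊤,
      ∀ (u : S) (hu : u ∈ P) (hu' : u ∈ Nphi P φ), φbar ⟨u, hu'⟩ = φ ⟨u, hu⟩)

end Fusion

/-! Downward induction on `|P|`, the case `P = S` being Axiom `I_S`. For `P < S` let `N'` be a
fully centralized conjugate of `N_S(P)` with maximal normalizer, so that `Aut_S(N')` is Sylow in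
`Aut_F(N')` by induction. If `Aut_S(P)` were not Sylow in `Aut_F(P)`, some `p`-element
`α ∈ Aut_F(P) \ Aut_S(P)` would normalize `Aut_S(P)`. Then `N_α = N_S(P)`, so by Axiom II `α`
extends to some `γ ∈ Aut_F(N_S(P))`, which may be taken to be a `p`-element; transported to `N'`
by a suitable `F`-isomorphism `χ`, it becomes conjugation by an element of `N_S(N')`. The image
`P' = χ(P)` is then fully centralized, since `χ` embeds `C_S(P) ≤ N_S(P)` into `C_S(P')`, and
`Aut_S(P')` contains a copy of `⟨Aut_S(P), α⟩`. Hence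
`|N_S(P')| = |Aut_S(P')| |C_S(P')| > |Aut_S(P)| |C_S(P)| = |N_S(P)|`, contradicting the choice
of `P`. -/

theorem Subgroup.card_lt_card_of_lt {G : Type*} [Group G] [Finite G] {H K : Subgroup G}
    (h : H < K) : Nat.card H < Nat.card K :=
  lt_of_le_of_ne (Subgroup.card_le_of_le h.le) fun hc =>
    h.ne (Subgroup.eq_of_le_of_card_ge h.le hc.ge)

theorem range_subtype_comp_mulEquiv {S : Type*} [Group S] {P Q : Subgroup S} (e : P ≃* Q) :
    (Q.subtype.comp e.toMonoidHom).range = Q := by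
  rw [MonoidHom.range_comp, MonoidHom.range_eq_top.mpr e.surjective, ← MonoidHom.range_eq_map,
    Subgroup.range_subtype]

section Sylow

variable {G : Type*} [Group G] {p : ℕ} [Fact p.Prime]

theorem isPGroup_zpowers_of_pow_eq_one {x : G} {n : ℕ} (hx : x ^ p ^ n = 1) :
    IsPGroup p (Subgroup.zpowers x) := by
  obtain ⟨j, -, hj⟩ := (Nat.dvd_prime_pow Fact.out).mp (orderOf_dvd_of_pow_eq_one hx)
  exact IsPGroup.of_card (by rw [Nat.card_zpowers, hj])

variable [Finite G]

theorem IsPGroup.exists_conj_mem_of_not_dvd_index {A : Subgroup G} (hA : IsPGroup p A)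
    (hidx : ¬ p ∣ A.index) {x : G} {n : ℕ} (hx : x ^ p ^ n = 1) : ∃ g : G, g * x * g⁻¹ ∈ A := by
  obtain ⟨Q, hQ⟩ := (isPGroup_zpowers_of_pow_eq_one hx).exists_le_sylow
  obtain ⟨g, hg⟩ := MulAction.exists_smul_eq G Q (hA.toSylow hidx)
  have hmem : g * x * g⁻¹ ∈ ((g • Q : Sylow p G) : Subgroup G) :=
    Subgroup.smul_mem_pointwise_smul x (MulAut.conj g) _ (hQ (Subgroup.mem_zpowers x))
  rw [hg] at hmem
  exact ⟨g, hmem⟩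

theorem IsPGroup.not_dvd_index_of_forall_mem_normalizer {A : Subgroup G} (hA : IsPGroup p A)
    (h : ∀ x : G, ∀ n : ℕ, x ^ p ^ n = 1 → x ∈ Subgroup.normalizer (A : Set G) → x ∈ A) :
    ¬ p ∣ A.index := by
  obtain ⟨T, hAT⟩ := hA.exists_le_sylow
  suffices hAT' : A = T by rw [hAT']; exact T.not_dvd_index
  by_contra hne
  have : Group.IsNilpotent T := T.isPGroup'.isNilpotent
  have hlt : A.subgroupOf T < ⊤ := by
    rw [lt_top_iff_ne_top, Ne, Subgroup.subgroupOf_eq_top]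
    exact fun hTA => hne (le_antisymm hAT hTA)
  -- normalizers grow in the nilpotent group `T`
  obtain ⟨y, hyN, hyA⟩ := SetLike.exists_of_lt (Group.normalizerCondition_of_isNilpotent _ hlt)
  rw [← Subgroup.subgroupOf_normalizer_eq hAT, Subgroup.mem_subgroupOf] at hyN
  obtain ⟨n, hn⟩ := T.isPGroup' y
  exact hyA (h y n (by simpa using congrArg Subtype.val hn) hyN)

end Sylow

theorem exists_pow_pow_eq_one_and_pow_eq_self {G H : Type*} [Group G] [Monoid H] {p : ℕ}
    (hp : p.Prime) {g : G} (hg : IsOfFinOrder g) {a : H} {n : ℕ} (ha : a ^ p ^ n = 1) :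
    ∃ e m : ℕ, (g ^ e) ^ p ^ m = 1 ∧ a ^ e = a := by
  obtain ⟨j, -, hj⟩ := (Nat.dvd_prime_pow hp).mp (orderOf_dvd_of_pow_eq_one ha)
  have hcop : (ordCompl[p] (orderOf g)).Coprime (orderOf a) := by
    rw [hj]
    exact (Nat.coprime_ordCompl hp hg.orderOf_pos.ne').symm.pow_right j
  obtain ⟨c, hc⟩ := exists_pow_eq_self_of_coprime hcop
  -- `e` kills the `p'`-part of `g` and is `≡ 1` modulo the order of `a`
  refine ⟨ordCompl[p] (orderOf g) * c, (orderOf g).factorization p, ?_, by rw [pow_mul, hc]⟩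
  rw [← pow_mul, mul_right_comm, mul_comm _ (p ^ _), Nat.ordProj_mul_ordCompl_eq_self, pow_mul,
    pow_orderOf_eq_one, one_pow]

namespace FusionSystem

variable {S : Type*} [Group S] (F : FusionSystem S)

theorem mem_hom_of_le {P Q R : Subgroup S} {φ : P →* S} (hφ : φ ∈ F.Hom P Q)
    (hQR : Q ≤ R) : φ ∈ F.Hom P R := by
  convert F.comp_mem' hφ (F.conj_mem' Q R 1 fun u hu => by simpa using hQR hu) using 1
  ext u
  simp [conjHom]

theorem comp_inclusion_mem {P Q R : Subgroup S} (hPQ : P ≤ Q) {φ : Q →* S}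
    (hφ : φ ∈ F.Hom Q R) : φ.comp (Subgroup.inclusion hPQ) ∈ F.Hom P R := by
  convert F.comp_mem' (F.conj_mem' P Q 1 fun u hu => by simpa using hPQ hu) hφ using 1
  ext u
  exact congrArg φ (Subtype.ext (by simp [conjHom]))

def IsIso {P Q : Subgroup S} (e : P ≃* Q) : Prop :=
  Q.subtype.comp e.toMonoidHom ∈ F.Hom P Q

variable {F}

theorem isIso_refl (P : Subgroup S) : F.IsIso (MulEquiv.refl P) := by
  unfold IsIso
  convert F.conj_mem' P P 1 (fun u hu => by simpa using hu) using 1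
  ext u
  simp [conjHom]

theorem IsIso.trans {P Q R : Subgroup S} {e : P ≃* Q} {e' : Q ≃* R} (he : F.IsIso e)
    (he' : F.IsIso e') : F.IsIso (e.trans e') :=
  F.comp_mem' he he'

theorem exists_inv_of_range_eq {P Q : Subgroup S} {φ : P →* S} (hφ : φ ∈ F.Hom P Q)
    (hQ : φ.range = Q) :
    ∃ ψ ∈ F.Hom Q P, ∀ u : P, ψ ⟨φ u, hQ ▸ ⟨u, rfl⟩⟩ = u := by
  subst hQ
  exact F.inv_mem' hφ

theorem IsIso.symm {P Q : Subgroup S} {e : P ≃* Q} (he : F.IsIso e) : F.IsIso e.symm := by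
  obtain ⟨ψ, hψ, hinv⟩ := exists_inv_of_range_eq he (range_subtype_comp_mulEquiv e)
  unfold IsIso
  convert hψ using 1
  ext v
  simpa using (hinv (e.symm v)).symm

theorem IsIso.isConj {P Q : Subgroup S} {e : P ≃* Q} (he : F.IsIso e) : F.Hom.IsConj P Q :=
  ⟨_, he, range_subtype_comp_mulEquiv e⟩

theorem _root_.Collection.IsConj.exists_isIso {P Q : Subgroup S} (h : F.Hom.IsConj P Q) :
    ∃ e : P ≃* Q, F.IsIso e := by
  obtain ⟨φ, hφ, rfl⟩ := h
  exact ⟨MonoidHom.ofInjective (F.injective' hφ), F.target_mem' hφ⟩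

theorem _root_.Collection.IsConj.trans {P Q R : Subgroup S} (h : F.Hom.IsConj P Q)
    (h' : F.Hom.IsConj Q R) : F.Hom.IsConj P R := by
  obtain ⟨e, he⟩ := h.exists_isIso
  obtain ⟨e', he'⟩ := h'.exists_isIso
  exact (he.trans he').isConj

theorem _root_.Collection.IsConj.card_eq {P Q : Subgroup S} (h : F.Hom.IsConj P Q) :
    Nat.card P = Nat.card Q := by
  obtain ⟨e, -⟩ := h.exists_isIso
  exact Nat.card_congr e.toEquiv

end FusionSystem

section Automorphisms

variable {S : Type*} [Group S]

def autToHom (P : Subgroup S) (f : MulAut P) : P →* S :=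
  P.subtype.comp f.toMonoidHom

theorem autToHom_injective (P : Subgroup S) : Function.Injective (autToHom P) :=
  fun _ _ h => MulEquiv.ext fun u => Subtype.ext (DFunLike.congr_fun h u)

theorem range_autToHom (P : Subgroup S) (f : MulAut P) : (autToHom P f).range = P :=
  range_subtype_comp_mulEquiv f

/- `Aut_F(P)` and `Aut_S(P)` as subgroups of `MulAut P`; `autToHom` maps them onto the sets
`F.Hom P P` and `autSSet P` of the statement. -/
def autF (F : FusionSystem S) (P : Subgroup S) : Subgroup (MulAut P) where
  carrier := {f | F.IsIso f}
  one_mem' := FusionSystem.isIso_refl P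
  mul_mem' hf hg := hg.trans hf
  inv_mem' hf := hf.symm

def autS (P : Subgroup S) : Subgroup (MulAut P) :=
  P.normalizerMonoidHom.range

theorem autS_le_autF (F : FusionSystem S) (P : Subgroup S) : autS P ≤ autF F P := by
  rintro _ ⟨x, rfl⟩
  exact F.conj_mem' P P x fun u hu => (x.2 u).mp hu

theorem image_autToHom_autS (P : Subgroup S) :
    autToHom P '' (autS P : Set (MulAut P)) = autSSet P := by
  ext φ
  constructor
  · rintro ⟨_, ⟨x, rfl⟩, rfl⟩
    exact ⟨x, x.2, rfl⟩
  · rintro ⟨s, hs, rfl⟩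
    exact ⟨_, ⟨⟨s, hs⟩, rfl⟩, rfl⟩

theorem card_autSSet_eq_card_autS (P : Subgroup S) :
    Nat.card (autSSet P) = Nat.card (autS P) := by
  rw [← image_autToHom_autS, Nat.card_image_of_injective (autToHom_injective P)]
  rfl

theorem IsPGroup.autS {p : ℕ} (hS : IsPGroup p S) (P : Subgroup S) : IsPGroup p (autS P) := by
  rw [_root_.autS, MonoidHom.range_eq_map]
  exact ((hS.to_subgroup _).to_subgroup ⊤).map _

theorem IsPGroup.autS_subgroupOf_autF {p : ℕ} (hS : IsPGroup p S) (F : FusionSystem S)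
    (P : Subgroup S) : IsPGroup p ((_root_.autS P).subgroupOf (autF F P)) :=
  (hS.autS P).of_equiv (Subgroup.subgroupOfEquivOfLe (autS_le_autF F P)).symm

variable [Finite S]

theorem FusionSystem.exists_mem_autF_of_range_le (F : FusionSystem S) {P Q : Subgroup S}
    {φ : P →* S} (hφ : φ ∈ F.Hom P Q) (hrange : φ.range ≤ P) :
    ∃ f ∈ autF F P, autToHom P f = φ := by
  have hbij : Function.Bijective (φ.codRestrict P fun u => hrange ⟨u, rfl⟩) :=
    Finite.injective_iff_bijective.mp fun a b h => F.injective' hφ (congrArg Subtype.val h)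
  have hφP : φ.range = P := le_antisymm hrange fun v hv =>
    let ⟨u, hu⟩ := hbij.2 ⟨v, hv⟩
    ⟨u, congrArg Subtype.val hu⟩
  have hφ' := F.target_mem' hφ
  rw [hφP] at hφ'
  exact ⟨MulEquiv.ofBijective _ hbij, hφ', rfl⟩

theorem image_autToHom_autF (F : FusionSystem S) (P : Subgroup S) :
    autToHom P '' (autF F P : Set (MulAut P)) = F.Hom P P := by
  ext φ
  constructor
  · rintro ⟨f, hf, rfl⟩
    exact hf
  · intro hφ
    obtain ⟨f, hf, rfl⟩ :=
      F.exists_mem_autF_of_range_le hφ fun _ ⟨u, hu⟩ => hu ▸ F.mapsTo' hφ u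
    exact ⟨f, hf, rfl⟩

theorem card_hom_self_eq_card_autF (F : FusionSystem S) (P : Subgroup S) :
    Nat.card (F.Hom P P) = Nat.card (autF F P) := by
  rw [← image_autToHom_autF, Nat.card_image_of_injective (autToHom_injective P)]
  rfl

theorem FusionSystem.autSIsSylow_iff {p : ℕ} (hp : p.Prime) (hS : IsPGroup p S)
    (F : FusionSystem S) (P : Subgroup S) :
    F.Hom.AutSIsSylow p P ↔ ¬ p ∣ (autS P).relIndex (autF F P) := by
  have hcard : Nat.card (F.Hom P P) = (autS P).relIndex (autF F P) * Nat.card (autSSet P) := by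
    have h := Subgroup.relIndex_mul_relIndex ⊥ (autS P) (autF F P) bot_le (autS_le_autF F P)
    rw [Subgroup.relIndex_bot_left, Subgroup.relIndex_bot_left] at h
    rw [card_hom_self_eq_card_autF, card_autSSet_eq_card_autS, ← h, mul_comm]
  constructor
  · rintro ⟨-, -, k, hk, hk'⟩
    rw [hcard, card_autSSet_eq_card_autS, Nat.mul_left_inj Nat.card_pos.ne'] at hk'
    rwa [hk']
  · intro h
    refine ⟨?_, ?_, _, h, hcard⟩
    · rw [← image_autToHom_autS, ← image_autToHom_autF]
      exact Set.image_mono (autS_le_autF F P)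
    · rw [card_autSSet_eq_card_autS]
      have := Fact.mk hp
      exact (hS.autS P).exists_card_eq

end Automorphisms

section Transport

variable {S : Type*} [Group S]

theorem card_normalizer_eq_card_autS_mul_card_centralizer (P : Subgroup S) :
    Nat.card (Subgroup.normalizer (P : Set S)) =
      Nat.card (autS P) * Nat.card (Subgroup.centralizer (P : Set S)) := by
  rw [Subgroup.card_eq_card_quotient_mul_card_subgroup P.normalizerMonoidHom.ker,
    Nat.card_congr (QuotientGroup.quotientKerEquivRange _).toEquiv,
    Subgroup.normalizerMonoidHom_ker,
    Nat.card_congr (Subgroup.subgroupOfEquivOfLe (Subgroup.centralizer_le_normalizer _)).toEquiv]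
  rfl

def MulAut.Extends {P N : Subgroup S} (h : P ≤ N) (γ : MulAut N) (β : MulAut P) : Prop :=
  ∀ u : P, γ (Subgroup.inclusion h u) = Subgroup.inclusion h (β u)

theorem MulAut.Extends.pow {P N : Subgroup S} {h : P ≤ N} {γ : MulAut N} {β : MulAut P}
    (hγβ : MulAut.Extends h γ β) (k : ℕ) : MulAut.Extends h (γ ^ k) (β ^ k) := by
  induction k with
  | zero => exact fun u => rfl
  | succ k ih =>
    intro u
    rw [pow_succ, pow_succ, MulAut.mul_apply, MulAut.mul_apply, hγβ, ih]

theorem extends_conj_normalizerMonoidHom (P : Subgroup S) (x : Subgroup.normalizer (P : Set S)) :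
    MulAut.Extends P.le_normalizer (MulAut.conj x) (P.normalizerMonoidHom x) :=
  fun _ => rfl

theorem conj_mem_autS (N : Subgroup S) (n : N) : MulAut.conj n ∈ autS N :=
  ⟨⟨n, N.le_normalizer n.2⟩, by ext; rfl⟩

theorem MulAut.congr_conj {G H : Type*} [Group G] [Group H] (χ : G ≃* H) (g : G) :
    MulAut.congr χ (MulAut.conj g) = MulAut.conj (χ g) := by
  ext
  simp

def MulEquiv.restrictHom {P N N' : Subgroup S} (χ : N ≃* N') (h : P ≤ N) : P →* S :=
  N'.subtype.comp (χ.toMonoidHom.comp (Subgroup.inclusion h))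

theorem MulEquiv.restrictHom_injective {P N N' : Subgroup S} (χ : N ≃* N') (h : P ≤ N) :
    Function.Injective (χ.restrictHom h) :=
  Subtype.val_injective.comp (χ.injective.comp (Subgroup.inclusion_injective h))

variable [Finite S]

theorem card_centralizer_le_card_centralizer_restrictHom_range {P N N' : Subgroup S}
    (χ : N ≃* N') (h : P ≤ N) (hC : Subgroup.centralizer (P : Set S) ≤ N) :
    Nat.card (Subgroup.centralizer (P : Set S)) ≤
      Nat.card (Subgroup.centralizer ((χ.restrictHom h).range : Set S)) := by
  refine Nat.card_le_card_of_injective (fun x => ⟨χ ⟨x, hC x.2⟩, ?_⟩) fun x y hxy => ?_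
  · rw [Subgroup.mem_centralizer_iff]
    rintro _ ⟨u, rfl⟩
    have hux :
        Subgroup.inclusion h u * ⟨x, hC x.2⟩ = ⟨x, hC x.2⟩ * Subgroup.inclusion h u :=
      Subtype.ext (Subgroup.mem_centralizer_iff.mp x.2 u u.2)
    simpa [MulEquiv.restrictHom] using congrArg (fun n => (χ n : S)) hux
  · exact Subtype.ext (by simpa using Subtype.ext_iff.mp hxy)

theorem congr_mem_autS_of_extends {P N N' : Subgroup S} (χ : N ≃* N') (h : P ≤ N)
    {γ : MulAut N} {β : MulAut P} (hγβ : MulAut.Extends h γ β)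
    (hγ : MulAut.congr χ γ ∈ autS N') :
    MulAut.congr (MonoidHom.ofInjective (χ.restrictHom_injective h)) β ∈
      autS (χ.restrictHom h).range := by
  obtain ⟨t, ht⟩ := hγ
  have key : ∀ u : P, (t : S) * χ.restrictHom h u * (t : S)⁻¹ = χ.restrictHom h (β u) := by
    intro u
    simpa [MulEquiv.restrictHom, hγβ u] using
      congrArg (fun f : MulAut N' => (f (χ (Subgroup.inclusion h u)) : S)) ht
  have ht' : (t : S) ∈ Subgroup.normalizer ((χ.restrictHom h).range : Set S) :=
    Subgroup.mem_normalizer_fintype fun _ ⟨u, hu⟩ => hu ▸ key u ▸ ⟨β u, rfl⟩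
  refine ⟨⟨t, ht'⟩, ?_⟩
  ext v
  obtain ⟨u, rfl⟩ := (MonoidHom.ofInjective (χ.restrictHom_injective h)).surjective v
  rw [Subgroup.normalizerMonoidHom_apply_apply_coe, MonoidHom.ofInjective_apply,
    MulAut.congr_apply]
  simpa [MonoidHom.ofInjective_apply] using key u

theorem card_autS_lt_card_autS_restrictHom_range {P N' : Subgroup S}
    (χ : Subgroup.normalizer (P : Set S) ≃* N') {γ : MulAut (Subgroup.normalizer (P : Set S))}
    {α : MulAut P} (hγα : MulAut.Extends P.le_normalizer γ α)
    (hγ : MulAut.congr χ γ ∈ autS N') (hα : α ∉ autS P) :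
    Nat.card (autS P) < Nat.card (autS (χ.restrictHom P.le_normalizer).range) := by
  set e := MonoidHom.ofInjective (χ.restrictHom_injective P.le_normalizer)
  set M := (autS (χ.restrictHom P.le_normalizer).range).map (MulAut.congr e).symm.toMonoidHom
  have hM : ∀ γ' β, MulAut.Extends P.le_normalizer γ' β → MulAut.congr χ γ' ∈ autS N' →
      β ∈ M := fun γ' β hγ'β hγ' =>
    Subgroup.mem_map_equiv.mpr (congr_mem_autS_of_extends χ _ hγ'β hγ')
  have hle : autS P ≤ M := by
    rintro _ ⟨x, rfl⟩
    refine hM _ _ (extends_conj_normalizerMonoidHom P x) ?_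
    rw [MulAut.congr_conj]
    exact conj_mem_autS N' _
  have hne : autS P ≠ M := fun hPM => hα (hPM ▸ hM γ α hγα hγ)
  calc Nat.card (autS P) < Nat.card M := Subgroup.card_lt_card_of_lt (lt_of_le_of_ne hle hne)
    _ = _ := Subgroup.card_map_of_injective (MulAut.congr e).symm.injective

end Transport

def Collection.MaxNormalizerAmongFullyCentralized {S : Type*} [Group S] (C : Collection S)
    (P : Subgroup S) : Prop :=
  ∀ Q : Subgroup S, C.IsConj P Q → C.FullyCentralized Q →
    Nat.card (Subgroup.normalizer (Q : Set S)) ≤ Nat.card (Subgroup.normalizer (P : Set S))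

namespace FusionSystem

variable {S : Type*} [Group S] {F : FusionSystem S}

theorem IsIso.congr_mem_autF {N N' : Subgroup S} {χ : N ≃* N'} (hχ : F.IsIso χ) {f : MulAut N}
    (hf : f ∈ autF F N) : MulAut.congr χ f ∈ autF F N' := by
  show F.IsIso (MulAut.congr χ f)
  rw [MulAut.congr_apply]
  exact hχ.symm.trans (IsIso.trans hf hχ)

theorem IsIso.isConj_restrictHom_range {P N N' : Subgroup S} {χ : N ≃* N'} (hχ : F.IsIso χ)
    (h : P ≤ N) : F.Hom.IsConj P (χ.restrictHom h).range :=
  ⟨_, F.target_mem' (F.comp_inclusion_mem h hχ), rfl⟩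

theorem _root_.Collection.FullyCentralized.of_isConj {P Q : Subgroup S}
    (hP : F.Hom.FullyCentralized P) (hPQ : F.Hom.IsConj P Q)
    (hC : Nat.card (Subgroup.centralizer (P : Set S)) ≤
      Nat.card (Subgroup.centralizer (Q : Set S))) :
    F.Hom.FullyCentralized Q :=
  fun R hQR => (hP R (hPQ.trans hQR)).trans hC

theorem card_autS_le_of_isConj [Finite S] {P Q : Subgroup S} (hP : F.Hom.FullyCentralized P)
    (hmax : F.Hom.MaxNormalizerAmongFullyCentralized P) (hPQ : F.Hom.IsConj P Q)
    (hC : Nat.card (Subgroup.centralizer (P : Set S)) ≤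
      Nat.card (Subgroup.centralizer (Q : Set S))) :
    Nat.card (autS Q) ≤ Nat.card (autS P) := by
  have hN := hmax Q hPQ (hP.of_isConj hPQ hC)
  rw [card_normalizer_eq_card_autS_mul_card_centralizer,
    card_normalizer_eq_card_autS_mul_card_centralizer, le_antisymm (hP Q hPQ) hC] at hN
  exact Nat.le_of_mul_le_mul_right hN Nat.card_pos

theorem exists_isConj_fullyCentralized [Finite S] (F : FusionSystem S) (P : Subgroup S) :
    ∃ Q, F.Hom.IsConj P Q ∧ F.Hom.FullyCentralized Q := by
  have : Nonempty {Q // F.Hom.IsConj P Q} := ⟨⟨P, (isIso_refl P).isConj⟩⟩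
  obtain ⟨⟨Q, hPQ⟩, hQ⟩ := Finite.exists_max fun Q : {Q // F.Hom.IsConj P Q} =>
    Nat.card (Subgroup.centralizer ((Q : Subgroup S) : Set S))
  exact ⟨Q, hPQ, fun R hQR => hQ ⟨R, hPQ.trans hQR⟩⟩

theorem exists_isConj_maxNormalizerAmongFullyCentralized [Finite S] (F : FusionSystem S)
    (P : Subgroup S) : ∃ Q, F.Hom.IsConj P Q ∧ F.Hom.FullyCentralized Q ∧
      F.Hom.MaxNormalizerAmongFullyCentralized Q := by
  obtain ⟨Q₀, hPQ₀, hQ₀⟩ := F.exists_isConj_fullyCentralized P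
  have : Nonempty {Q // F.Hom.IsConj P Q ∧ F.Hom.FullyCentralized Q} :=
    ⟨⟨Q₀, hPQ₀, hQ₀⟩⟩
  obtain ⟨⟨Q, hPQ, hQ⟩, hmax⟩ := Finite.exists_max
    fun Q : {Q // F.Hom.IsConj P Q ∧ F.Hom.FullyCentralized Q} =>
      Nat.card (Subgroup.normalizer ((Q : Subgroup S) : Set S))
  exact ⟨Q, hPQ, hQ, fun R hQR hR => hmax ⟨R, hPQ.trans hQR, hR⟩⟩

theorem exists_isIso_congr_mem_autS [Finite S] {p : ℕ} [Fact p.Prime] (hS : IsPGroup p S)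
    {N N' : Subgroup S} (hNN' : F.Hom.IsConj N N')
    (hN' : ¬ p ∣ (autS N').relIndex (autF F N')) {ψ : MulAut N} (hψ : ψ ∈ autF F N)
    {n : ℕ} (hψp : ψ ^ p ^ n = 1) :
    ∃ χ : N ≃* N', F.IsIso χ ∧ MulAut.congr χ ψ ∈ autS N' := by
  obtain ⟨χ₀, hχ₀⟩ := hNN'.exists_isIso
  obtain ⟨g, hg⟩ := (hS.autS_subgroupOf_autF F N').exists_conj_mem_of_not_dvd_index hN'
    (x := ⟨MulAut.congr χ₀ ψ, hχ₀.congr_mem_autF hψ⟩) (n := n)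
    (Subtype.ext (by rw [Subgroup.coe_pow, ← map_pow, hψp, map_one]; rfl))
  refine ⟨χ₀.trans (g : MulAut N'), hχ₀.trans g.2, ?_⟩
  have hconj :
      MulAut.congr (χ₀.trans (g : MulAut N')) ψ = g * MulAut.congr χ₀ ψ * g⁻¹ := by
    ext
    simp [MulAut.mul_apply, MulAut.inv_def]
  rw [hconj]
  exact hg

end FusionSystem

section Extension

variable {S : Type*} [Group S]

theorem normalizer_le_Nphi {P : Subgroup S} {α : MulAut P}
    (hαN : α ∈ Subgroup.normalizer (autS P : Set (MulAut P))) :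
    Subgroup.normalizer (P : Set S) ≤ Nphi P (autToHom P α) := by
  intro x hx
  obtain ⟨y, hy⟩ : α * P.normalizerMonoidHom ⟨x, hx⟩ * α⁻¹ ∈ autS P :=
    (Subgroup.mem_normalizer_iff.mp hαN _).mp ⟨⟨x, hx⟩, rfl⟩
  refine ⟨hx, y, by rw [range_autToHom]; exact y.2, fun u v hu hv hv_eq => ?_⟩
  subst hv_eq
  have hyα := congrArg (fun f : MulAut P => (f (α ⟨u, hu⟩) : S)) hy
  simp only [MulAut.mul_apply, MulAut.inv_apply_self, Subgroup.normalizerMonoidHom_apply_apply_coe]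
    at hyα
  exact hyα.symm

theorem range_le_normalizer_of_extends [Finite S] {P : Subgroup S} {α : MulAut P}
    {ψ : Subgroup.normalizer (P : Set S) →* S}
    (hψα : ∀ u : P, ψ (Subgroup.inclusion P.le_normalizer u) = α u) :
    ψ.range ≤ Subgroup.normalizer (P : Set S) := by
  rintro _ ⟨x, rfl⟩
  refine Subgroup.mem_normalizer_fintype fun v hv => ?_
  obtain ⟨u, rfl⟩ : ∃ u, (α u : S) = v := ⟨α.symm ⟨v, hv⟩, by simp⟩
  have hxu : x * Subgroup.inclusion P.le_normalizer u * x⁻¹ =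
      Subgroup.inclusion P.le_normalizer ⟨x * u * x⁻¹, (x.2 u).mp u.2⟩ := rfl
  rw [← hψα, ← map_inv, ← map_mul, ← map_mul, hxu, hψα]
  exact (α _).2

theorem FusionSystem.exists_extends_of_mem_normalizer_autS [Finite S] {F : FusionSystem S}
    (hII : F.AxiomII) {P : Subgroup S} (hP : F.Hom.FullyCentralized P) {α : MulAut P}
    (hα : α ∈ autF F P) (hαN : α ∈ Subgroup.normalizer (autS P : Set (MulAut P))) :
    ∃ γ ∈ autF F (Subgroup.normalizer (P : Set S)), MulAut.Extends P.le_normalizer γ α := by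
  obtain ⟨φ, hφ, hφα⟩ := hII P (autToHom P α) (F.mem_hom_of_le hα le_top)
    (by rwa [range_autToHom])
  set ψ := φ.comp (Subgroup.inclusion (normalizer_le_Nphi hαN))
  have hψα : ∀ u : P, ψ (Subgroup.inclusion P.le_normalizer u) = α u := fun u => hφα u u.2 _
  obtain ⟨γ, hγ, hγψ⟩ := F.exists_mem_autF_of_range_le (F.comp_inclusion_mem _ hφ)
    (range_le_normalizer_of_extends hψα)
  exact ⟨γ, hγ, fun u => Subtype.ext ((DFunLike.congr_fun hγψ _).trans (hψα u))⟩

end Extension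

namespace FusionSystem

variable {S : Type*} [Group S] [Finite S] {p : ℕ} [Fact p.Prime] {F : FusionSystem S}

theorem mem_autS_of_mem_normalizer_autS (hS : IsPGroup p S) (hII : F.AxiomII) {P N' : Subgroup S}
    (hP : F.Hom.FullyCentralized P) (hmax : F.Hom.MaxNormalizerAmongFullyCentralized P)
    (hPN' : F.Hom.IsConj (Subgroup.normalizer (P : Set S)) N')
    (hN' : ¬ p ∣ (autS N').relIndex (autF F N')) {α : MulAut P} (hα : α ∈ autF F P)
    {n : ℕ} (hαp : α ^ p ^ n = 1) (hαN : α ∈ Subgroup.normalizer (autS P : Set (MulAut P))) :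
    α ∈ autS P := by
  by_contra hαS
  obtain ⟨γ, hγ, hγα⟩ := exists_extends_of_mem_normalizer_autS hII hP hα hαN
  obtain ⟨e, m, hγp, hαe⟩ := exists_pow_pow_eq_one_and_pow_eq_self Fact.out
    (isOfFinOrder_of_finite γ) hαp
  obtain ⟨χ, hχ, hχγ⟩ := exists_isIso_congr_mem_autS hS hPN' hN' (pow_mem hγ e) hγp
  have hlt := card_autS_lt_card_autS_restrictHom_range χ (hαe ▸ hγα.pow e) hχγ hαS
  have hle := card_autS_le_of_isConj hP hmax (hχ.isConj_restrictHom_range P.le_normalizer)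
    (card_centralizer_le_card_centralizer_restrictHom_range χ P.le_normalizer
      (Subgroup.centralizer_le_normalizer _))
  omega

theorem not_dvd_relIndex_autS_autF (hS : IsPGroup p S) (hIS : F.AxiomIS p) (hII : F.AxiomII)
    (P : Subgroup S) (hP : F.Hom.FullyCentralized P)
    (hmax : F.Hom.MaxNormalizerAmongFullyCentralized P) :
    ¬ p ∣ (autS P).relIndex (autF F P) := by
  by_cases hPS : P = ⊤
  · subst hPS
    exact (F.autSIsSylow_iff Fact.out hS ⊤).mp hIS
  obtain ⟨N', hPN', hN'fc, hN'max⟩ :=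
    F.exists_isConj_maxNormalizerAmongFullyCentralized (Subgroup.normalizer (P : Set S))
  have : Group.IsNilpotent S := hS.isNilpotent
  have hPN : P < Subgroup.normalizer (P : Set S) :=
    Group.normalizerCondition_of_isNilpotent P (lt_top_iff_ne_top.mpr hPS)
  have hlt : Nat.card P < Nat.card N' := hPN'.card_eq ▸ Subgroup.card_lt_card_of_lt hPN
  have hN' := not_dvd_relIndex_autS_autF hS hIS hII N' hN'fc hN'max
  refine (hS.autS_subgroupOf_autF F P).not_dvd_index_of_forall_mem_normalizer
    fun α n hαp hαN => ?_
  rw [← Subgroup.subgroupOf_normalizer_eq (autS_le_autF F P), Subgroup.mem_subgroupOf] at hαN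
  exact mem_autS_of_mem_normalizer_autS hS hII hP hmax hPN' hN' α.2
    (by simpa using congrArg Subtype.val hαp) hαN
termination_by Nat.card S - Nat.card P
decreasing_by
  have := N'.card_le_card_group
  omega

end FusionSystem

/-- Let `F` be a fusion system on a finite `p`-group `S` satisfying
Axioms I_S and II.  If `P ≤ S` is fully `F`-centralized and `|N_S(P)| ≥ |N_S(Q)|` for
every fully `F`-centralized subgroup `Q` which is `F`-conjugate to `P`, then `Aut_S(P)`
is a Sylow `p`-subgroup of `Aut_F(P)`. -/
theorem autS_isSylow_of_fullyCentralized_max_normalizer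
    (p : ℕ) (hp : p.Prime) (S : Type*) [Group S] [Finite S] (hS : IsPGroup p S)
    (F : FusionSystem S) (hIS : F.AxiomIS p) (hII : F.AxiomII)
    (P : Subgroup S) (hP : F.Hom.FullyCentralized P)
    (hmax : ∀ Q : Subgroup S, F.Hom.IsConj P Q → F.Hom.FullyCentralized Q →
      Nat.card (Subgroup.normalizer (Q : Set S)) ≤ Nat.card (Subgroup.normalizer (P : Set S))) :
    F.Hom.AutSIsSylow p P := by
  have := Fact.mk hp
  exact (F.autSIsSylow_iff hp hS P).mpr (F.not_dvd_relIndex_autS_autF hS hIS hII P hP hmax)
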